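/- arXiv:2306.17613 — 4 statements merged into one kernel-verified Lean document; each statement's English description precedes it below -/
import Mathlib

section
/- Let Γ be a group (with the discrete topology) and let (N_k)_{k∈ℕ} be a decreasing sequence of finite-index normal subgroups of Γ. Let ℕ⁺ = ℕ ∪ {∞} be the one-point compactification of ℕ, and consider on the product space ℕ⁺ × Γ the equivalence relation (k,t) ~ (l,u) defined by: k = l, and t⁻¹u ∈ N_k when k ∈ ℕ, while t = u when k = ∞. Then the quotient space 𝒢 = (ℕ⁺ × Γ)/~, equipped with the quotient topology, is Hausdorff if and only if for every s ∈ Γ with s ≠ 1 there exists k₀ ∈ ℕ such that s ∉ N_k for all k ≥ k₀. -/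
open OnePoint

/-- The HLS equivalence relation on `ℕ⁺ × Γ`: `(k,t) ~ (l,u)` iff `k = l`, and
`t⁻¹ * u ∈ N k` when `k ∈ ℕ`, while `t = u` when `k = ∞`. -/
def hlsRel {Γ : Type*} [Group Γ] (N : ℕ → Subgroup Γ) :
    OnePoint ℕ × Γ → OnePoint ℕ × Γ → Prop := fun a b =>
  a.1 = b.1 ∧
    ((∃ n : ℕ, a.1 = (n : OnePoint ℕ) ∧ a.2⁻¹ * b.2 ∈ N n) ∨
      (a.1 = (∞ : OnePoint ℕ) ∧ a.2 = b.2))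

section Aux

variable {Γ : Type*} [Group Γ] (N : ℕ → Subgroup Γ)

lemma hlsRel_equivalence : Equivalence (hlsRel N) := by
  constructor
  · rintro ⟨k, t⟩
    refine ⟨rfl, ?_⟩
    cases k with
    | infty => exact Or.inr ⟨rfl, rfl⟩
    | coe n => exact Or.inl ⟨n, rfl, by simpa using (N n).one_mem⟩
  · rintro ⟨k, t⟩ ⟨l, u⟩ ⟨h1, h2⟩
    refine ⟨h1.symm, ?_⟩
    rcases h2 with ⟨n, hn, hm⟩ | ⟨hn, he⟩
    · refine Or.inl ⟨n, h1.symm.trans hn, ?_⟩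
      have := (N n).inv_mem hm
      simpa [mul_inv_rev] using this
    · exact Or.inr ⟨h1.symm.trans hn, he.symm⟩
  · rintro ⟨k, t⟩ ⟨l, u⟩ ⟨m, v⟩ ⟨h1, h2⟩ ⟨g1, g2⟩
    refine ⟨h1.trans g1, ?_⟩
    rcases h2 with ⟨n, hn, hm⟩ | ⟨hn, he⟩
    · rcases g2 with ⟨n', hn', hm'⟩ | ⟨hn', he'⟩
      · have hnn : n' = n := by
          have : (n' : OnePoint ℕ) = (n : OnePoint ℕ) := (hn'.symm.trans h1.symm).trans hn
          exact_mod_cast this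
        refine Or.inl ⟨n, hn, ?_⟩
        have hm'' : (l, u).2⁻¹ * (m, v).2 ∈ N n := hnn ▸ hm'
        have := (N n).mul_mem hm hm''
        simpa [mul_assoc] using this
      · exfalso
        rw [h1, hn'] at hn
        simp at hn
    · rcases g2 with ⟨n', hn', hm'⟩ | ⟨hn', he'⟩
      · exfalso
        rw [h1, hn'] at hn
        simp at hn
      · exact Or.inr ⟨hn, he.trans he'⟩

lemma hls_mk_eq {a b : OnePoint ℕ × Γ} :
    Quot.mk (hlsRel N) a = Quot.mk (hlsRel N) b ↔ hlsRel N a b :=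
  Quot.eq.trans (hlsRel_equivalence N).eqvGen_iff

lemma hls_sat_preimage (A : Set (OnePoint ℕ × Γ))
    (hA : ∀ a b, hlsRel N a b → a ∈ A → b ∈ A) :
    Quot.mk (hlsRel N) ⁻¹' (Quot.mk (hlsRel N) '' A) = A := by
  ext x
  constructor
  · rintro ⟨a, ha, hax⟩
    exact hA a x ((hls_mk_eq N).mp hax) ha
  · intro hx
    exact ⟨x, hx, rfl⟩

variable [TopologicalSpace Γ] [DiscreteTopology Γ]

lemma hls_separation (A B : Set (OnePoint ℕ × Γ))
    (hAsat : ∀ a b, hlsRel N a b → a ∈ A → b ∈ A)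
    (hBsat : ∀ a b, hlsRel N a b → a ∈ B → b ∈ B)
    (hAo : IsOpen A) (hBo : IsOpen B) (hdisj : A ∩ B = ∅)
    {a b : OnePoint ℕ × Γ} (ha : a ∈ A) (hb : b ∈ B) :
    ∃ U V : Set (Quot (hlsRel N)), IsOpen U ∧ IsOpen V ∧
      Quot.mk (hlsRel N) a ∈ U ∧ Quot.mk (hlsRel N) b ∈ V ∧ Disjoint U V := by
  refine ⟨Quot.mk (hlsRel N) '' A, Quot.mk (hlsRel N) '' B, ?_, ?_,
    ⟨a, ha, rfl⟩, ⟨b, hb, rfl⟩, ?_⟩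
  · exact isQuotientMap_quot_mk.isOpen_preimage.mp
      (by rw [hls_sat_preimage N A hAsat]; exact hAo)
  · exact isQuotientMap_quot_mk.isOpen_preimage.mp
      (by rw [hls_sat_preimage N B hBsat]; exact hBo)
  · rw [Set.disjoint_iff_inter_eq_empty]
    ext q
    simp only [Set.mem_inter_iff, Set.mem_image, Set.mem_empty_iff_false, iff_false]
    rintro ⟨⟨x, hx, hxq⟩, ⟨y, hy, hyq⟩⟩
    have : hlsRel N y x := (hls_mk_eq N).mp (hyq.trans hxq.symm)
    have hxB : x ∈ B := hBsat y x this hy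
    have : x ∈ A ∩ B := ⟨hx, hxB⟩
    rw [hdisj] at this
    exact this

end Aux

theorem hls_hausdorff_iff {Γ : Type*} [Group Γ] [TopologicalSpace Γ] [DiscreteTopology Γ]
    (N : ℕ → Subgroup Γ) (hnorm : ∀ k, (N k).Normal)
    (hfin : ∀ k, (N k).FiniteIndex) (hdec : Antitone N) :
    T2Space (Quot (hlsRel N)) ↔
      ∀ s : Γ, s ≠ 1 → ∃ k₀ : ℕ, ∀ k ≥ k₀, s ∉ N k := by
  constructor
  · intro hT2 s hs
    by_contra hc
    push_neg at hc
    have hall : ∀ k, s ∈ N k := fun k => by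
      obtain ⟨k', hk', hmem⟩ := hc k
      exact hdec hk' hmem
    have hne : Quot.mk (hlsRel N) ((∞ : OnePoint ℕ), (1 : Γ)) ≠
        Quot.mk (hlsRel N) ((∞ : OnePoint ℕ), s) := by
      intro h
      obtain ⟨-, h⟩ := (hls_mk_eq N).mp h
      rcases h with ⟨n, hn, -⟩ | ⟨-, he⟩
      · simp at hn
      · exact hs he.symm
    obtain ⟨U, V, hU, hV, hxU, hyV, hUV⟩ := t2_separation hne
    set U' := Quot.mk (hlsRel N) ⁻¹' U with hU'def
    set V' := Quot.mk (hlsRel N) ⁻¹' V with hV'def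
    have hU'o : IsOpen U' := hU.preimage continuous_quot_mk
    have hV'o : IsOpen V' := hV.preimage continuous_quot_mk
    have key : ∀ (t : Γ) (W : Set (OnePoint ℕ × Γ)), IsOpen W →
        ((∞ : OnePoint ℕ), t) ∈ W → ∃ m : ℕ, ∀ k ≥ m, ((k : OnePoint ℕ), t) ∈ W := by
      intro t W hW hmem
      have hf : Continuous (fun x : OnePoint ℕ => (x, t)) :=
        continuous_id.prodMk continuous_const
      have hS : IsOpen ((fun x : OnePoint ℕ => (x, t)) ⁻¹' W) := hW.preimage hf
      have hinf : (∞ : OnePoint ℕ) ∈ (fun x : OnePoint ℕ => (x, t)) ⁻¹' W := hmem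
      rw [OnePoint.isOpen_iff_of_mem' hinf] at hS
      have hfin' : ((fun n : ℕ => ((n : OnePoint ℕ), t)) ⁻¹' W)ᶜ.Finite :=
        hS.1.finite ⟨inferInstance⟩
      obtain ⟨m, hm⟩ := hfin'.bddAbove
      refine ⟨m + 1, fun k hk => ?_⟩
      by_contra hkW
      have : k ∈ ((fun n : ℕ => ((n : OnePoint ℕ), t)) ⁻¹' W)ᶜ := hkW
      have := hm this
      omega
    obtain ⟨m₁, hm₁⟩ := key 1 U' hU'o hxU
    obtain ⟨m₂, hm₂⟩ := key s V' hV'o hyV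
    set k := max m₁ m₂
    have h1 : ((k : OnePoint ℕ), (1 : Γ)) ∈ U' := hm₁ k (le_max_left _ _)
    have h2 : ((k : OnePoint ℕ), s) ∈ V' := hm₂ k (le_max_right _ _)
    have hrel : hlsRel N ((k : OnePoint ℕ), (1 : Γ)) ((k : OnePoint ℕ), s) :=
      ⟨rfl, Or.inl ⟨k, rfl, by simpa using hall k⟩⟩
    have h1' : ((k : OnePoint ℕ), s) ∈ U' := by
      rw [hU'def, Set.mem_preimage, ← (hls_mk_eq N).mpr hrel]
      exact h1
    exact hUV.ne_of_mem h1' h2 rfl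
  · intro hcond
    constructor
    intro x y hxy
    induction x using Quot.ind with | _ a => ?_
    induction y using Quot.ind with | _ b => ?_
    obtain ⟨k, t⟩ := a
    obtain ⟨l, u⟩ := b
    by_cases hkl : k = l
    · subst hkl
      cases k with
      | coe n =>
        -- finite level n : separate by cosets
        have hnm : t⁻¹ * u ∉ N n := by
          intro hmem
          exact hxy ((hls_mk_eq N).mpr ⟨rfl, Or.inl ⟨n, rfl, hmem⟩⟩)
        set A : Set (OnePoint ℕ × Γ) :=
          {p | p.1 = ((n : ℕ) : OnePoint ℕ) ∧ t⁻¹ * p.2 ∈ N n} with hAdef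
        set B : Set (OnePoint ℕ × Γ) :=
          {p | p.1 = ((n : ℕ) : OnePoint ℕ) ∧ u⁻¹ * p.2 ∈ N n} with hBdef
        have hsat : ∀ (v : Γ) (a b : OnePoint ℕ × Γ), hlsRel N a b →
            a ∈ {p : OnePoint ℕ × Γ | p.1 = ((n : ℕ) : OnePoint ℕ) ∧ v⁻¹ * p.2 ∈ N n} →
            b ∈ {p : OnePoint ℕ × Γ | p.1 = ((n : ℕ) : OnePoint ℕ) ∧ v⁻¹ * p.2 ∈ N n} := by
          rintro v a b ⟨h1, h2⟩ ⟨ha1, ha2⟩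
          rcases h2 with ⟨n', hn', hm'⟩ | ⟨hn', -⟩
          · have hnn : n' = n := by
              have : (n' : OnePoint ℕ) = ((n : ℕ) : OnePoint ℕ) := hn'.symm.trans ha1
              exact_mod_cast this
            subst hnn
            refine ⟨h1.symm.trans ha1, ?_⟩
            have := (N n').mul_mem ha2 hm'
            simpa [mul_assoc] using this
          · exfalso
            rw [ha1] at hn'
            simp at hn'
        have hopen : ∀ v : Γ,
            IsOpen {p : OnePoint ℕ × Γ | p.1 = ((n : ℕ) : OnePoint ℕ) ∧ v⁻¹ * p.2 ∈ N n} := by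
          intro v
          have h1 : IsOpen {x : OnePoint ℕ | x = ((n : ℕ) : OnePoint ℕ)} := by
            have : {x : OnePoint ℕ | x = ((n : ℕ) : OnePoint ℕ)}
                = ((↑) : ℕ → OnePoint ℕ) '' {n} := by
              ext x
              simp [eq_comm]
            rw [this]
            exact OnePoint.isOpenMap_coe _ (isOpen_discrete _)
          exact (h1.preimage continuous_fst).inter
            ((isOpen_discrete {g : Γ | v⁻¹ * g ∈ N n}).preimage continuous_snd)
        have hdisj : A ∩ B = ∅ := by
          ext p
          simp only [hAdef, hBdef, Set.mem_inter_iff, Set.mem_setOf_eq,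
            Set.mem_empty_iff_false, iff_false]
          rintro ⟨⟨-, h1⟩, ⟨-, h2⟩⟩
          have := (N n).mul_mem h1 ((N n).inv_mem h2)
          simp only [mul_inv_rev, inv_inv] at this
          rw [show t⁻¹ * p.2 * (p.2⁻¹ * u) = t⁻¹ * u by group] at this
          exact hnm this
        obtain ⟨U, V, hU, hV, haU, hbV, hUV⟩ :=
          hls_separation N A B (hsat t) (hsat u) (hopen t) (hopen u) hdisj
            (a := (((n : ℕ) : OnePoint ℕ), t)) (b := (((n : ℕ) : OnePoint ℕ), u))
            ⟨rfl, by simpa using (N n).one_mem⟩ ⟨rfl, by simpa using (N n).one_mem⟩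
        exact ⟨U, V, hU, hV, haU, hbV, hUV⟩
      | infty =>
        -- level ∞ : t ≠ u
        have htu : t ≠ u := by
          intro h
          exact hxy ((hls_mk_eq N).mpr ⟨rfl, Or.inr ⟨rfl, h⟩⟩)
        have hs : t⁻¹ * u ≠ 1 := by
          intro h
          exact htu (by rwa [inv_mul_eq_one] at h)
        obtain ⟨k₀, hk₀⟩ := hcond (t⁻¹ * u) hs
        set A : Set (OnePoint ℕ × Γ) :=
          {p | (∃ k : ℕ, k₀ ≤ k ∧ p.1 = (k : OnePoint ℕ) ∧ t⁻¹ * p.2 ∈ N k) ∨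
            (p.1 = (∞ : OnePoint ℕ) ∧ p.2 = t)} with hAdef
        set B : Set (OnePoint ℕ × Γ) :=
          {p | (∃ k : ℕ, k₀ ≤ k ∧ p.1 = (k : OnePoint ℕ) ∧ u⁻¹ * p.2 ∈ N k) ∨
            (p.1 = (∞ : OnePoint ℕ) ∧ p.2 = u)} with hBdef
        have hsat : ∀ (v : Γ) (a b : OnePoint ℕ × Γ), hlsRel N a b →
            a ∈ {p : OnePoint ℕ × Γ |
              (∃ k : ℕ, k₀ ≤ k ∧ p.1 = (k : OnePoint ℕ) ∧ v⁻¹ * p.2 ∈ N k) ∨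
              (p.1 = (∞ : OnePoint ℕ) ∧ p.2 = v)} →
            b ∈ {p : OnePoint ℕ × Γ |
              (∃ k : ℕ, k₀ ≤ k ∧ p.1 = (k : OnePoint ℕ) ∧ v⁻¹ * p.2 ∈ N k) ∨
              (p.1 = (∞ : OnePoint ℕ) ∧ p.2 = v)} := by
          rintro v a b ⟨h1, h2⟩ ha
          rcases h2 with ⟨m, hm, hmem⟩ | ⟨hn', heq⟩
          · rcases ha with ⟨k, hk, hk1, hk2⟩ | ⟨hinf, -⟩
            · have hkm : m = k := by
                have : (m : OnePoint ℕ) = (k : OnePoint ℕ) := hm.symm.trans hk1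
                exact_mod_cast this
              subst hkm
              refine Or.inl ⟨m, hk, h1.symm.trans hk1, ?_⟩
              have := (N m).mul_mem hk2 hmem
              simpa [mul_assoc] using this
            · exfalso
              rw [hinf] at hm
              simp at hm
          · rcases ha with ⟨k, -, hk1, -⟩ | ⟨-, heqv⟩
            · exfalso
              rw [hn'] at hk1
              simp at hk1
            · exact Or.inr ⟨h1.symm.trans hn', heq.symm.trans heqv⟩
        have hopen : ∀ v : Γ,
            IsOpen {p : OnePoint ℕ × Γ |
              (∃ k : ℕ, k₀ ≤ k ∧ p.1 = (k : OnePoint ℕ) ∧ v⁻¹ * p.2 ∈ N k) ∨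
              (p.1 = (∞ : OnePoint ℕ) ∧ p.2 = v)} := by
          intro v
          rw [isOpen_iff_forall_mem_open]
          rintro ⟨x, g⟩ hp
          rcases hp with ⟨k, hk, hk1, hk2⟩ | ⟨hinf, heq⟩
          · -- point at finite level
            refine ⟨{q : OnePoint ℕ × Γ | q.1 = (k : OnePoint ℕ) ∧ q.2 = g}, ?_, ?_, ?_⟩
            · rintro ⟨y, h⟩ ⟨hy1, hy2⟩
              exact Or.inl ⟨k, hk, hy1, by rw [hy2]; exact hk2⟩
            · have h1 : IsOpen {x : OnePoint ℕ | x = (k : OnePoint ℕ)} := by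
                have : {x : OnePoint ℕ | x = (k : OnePoint ℕ)}
                    = ((↑) : ℕ → OnePoint ℕ) '' {k} := by
                  ext x; simp [eq_comm]
                rw [this]
                exact OnePoint.isOpenMap_coe _ (isOpen_discrete _)
              exact (h1.preimage continuous_fst).inter
                ((isOpen_discrete {h : Γ | h = g}).preimage continuous_snd)
            · exact ⟨hk1, rfl⟩
          · -- point at infinity
            subst heq
            set S : Set (OnePoint ℕ) :=
              {x | x = (∞ : OnePoint ℕ) ∨ ∃ k : ℕ, k₀ ≤ k ∧ x = (k : OnePoint ℕ)} with hSdef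
            have hScoe : ((↑) : ℕ → OnePoint ℕ) ⁻¹' S = {k | k₀ ≤ k} := by
              ext k
              simp only [hSdef, Set.mem_preimage, Set.mem_setOf_eq]
              constructor
              · rintro (h | ⟨k', hk', hkk'⟩)
                · simp at h
                · have : k = k' := by exact_mod_cast hkk'
                  omega
              · intro h
                exact Or.inr ⟨k, h, rfl⟩
            have hSopen : IsOpen S := by
              rw [OnePoint.isOpen_iff_of_mem' (Or.inl rfl)]
              constructor
              · rw [hScoe]
                have : ({k : ℕ | k₀ ≤ k})ᶜ = {k | k < k₀} := by
                  ext k; simp [not_le]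
                rw [this]
                exact (Set.finite_Iio k₀).isCompact
              · rw [hScoe]
                exact isOpen_discrete _
            refine ⟨S ×ˢ ({g} : Set Γ), ?_, hSopen.prod (isOpen_discrete _), ?_⟩
            · rintro ⟨y, h⟩ ⟨hy1, hy2⟩
              simp only [Set.mem_singleton_iff] at hy2
              subst hy2
              rcases hy1 with h | ⟨k, hk, hkk⟩
              · exact Or.inr ⟨h, rfl⟩
              · exact Or.inl ⟨k, hk, hkk, by simpa using (N k).one_mem⟩
            · exact ⟨Or.inl hinf, rfl⟩
        have hdisj : A ∩ B = ∅ := by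
          ext p
          simp only [hAdef, hBdef, Set.mem_inter_iff, Set.mem_setOf_eq,
            Set.mem_empty_iff_false, iff_false]
          rintro ⟨hA, hB⟩
          rcases hA with ⟨k, hk, hk1, hk2⟩ | ⟨hinf, heq⟩
          · rcases hB with ⟨k', hk', hk1', hk2'⟩ | ⟨hinf', -⟩
            · have hkk : k' = k := by
                have : (k' : OnePoint ℕ) = (k : OnePoint ℕ) := hk1'.symm.trans hk1
                exact_mod_cast this
              subst hkk
              have := (N k').mul_mem hk2 ((N k').inv_mem hk2')
              rw [show t⁻¹ * p.2 * (u⁻¹ * p.2)⁻¹ = t⁻¹ * u by group] at this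
              exact hk₀ k' hk this
            · rw [hk1] at hinf'; simp at hinf'
          · rcases hB with ⟨k, -, hk1, -⟩ | ⟨-, heq'⟩
            · rw [hinf] at hk1; simp at hk1
            · exact htu (heq.symm.trans heq')
        obtain ⟨U, V, hU, hV, haU, hbV, hUV⟩ :=
          hls_separation N A B (hsat t) (hsat u) (hopen t) (hopen u) hdisj
            (a := ((∞ : OnePoint ℕ), t)) (b := ((∞ : OnePoint ℕ), u))
            (Or.inr ⟨rfl, rfl⟩) (Or.inr ⟨rfl, rfl⟩)
        exact ⟨U, V, hU, hV, haU, hbV, hUV⟩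
    · -- different levels: separate via the first-coordinate map
      have hresp : ∀ a b : OnePoint ℕ × Γ, hlsRel N a b → a.1 = b.1 := fun a b h => h.1
      set F : Quot (hlsRel N) → OnePoint ℕ := Quot.lift Prod.fst hresp with hFdef
      have hFcont : Continuous F := continuous_quot_lift hresp continuous_fst
      obtain ⟨U, V, hU, hV, hkU, hlV, hUV⟩ := t2_separation hkl
      refine ⟨F ⁻¹' U, F ⁻¹' V, hU.preimage hFcont, hV.preimage hFcont, hkU, hlV, ?_⟩
      exact hUV.preimage F
end

section
/- Let X be a locally compact Hausdorff space and let (A, {π_x : A → A_x}_{x∈X}, X) be a field of C*-algebras over X: A and each A_x are C*-algebras, each π_x is a surjective *-homomorphism, ‖a‖ = sup_{x∈X} ‖π_x(a)‖ for every a ∈ A, A carries a C₀(X,ℂ)-module structure (f,a) ↦ f·a satisfying π_x(f·a) = f(x)·π_x(a) for all x ∈ X, f·(ab) = (f·a)b = a(f·b), (fg)·a = f·(g·a), and the closed linear span of {f·a : f ∈ C₀(X,ℂ), a ∈ A} is all of A. Fix x₀ ∈ X, and let C_{x₀}(X)A denote the closed linear span in A of {f·a : f ∈ C₀(X,ℂ),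 f(x₀) = 0, a ∈ A}. Then the function x ↦ ‖π_x(a)‖ is upper semicontinuous at x₀ for every a ∈ A if and only if ker π_{x₀} = C_{x₀}(X)A. -/
/-!
If `π x₀ a = 0` and the field is upper semicontinuous at `x₀`, then `‖π x a‖ < ε` on a
neighbourhood `U` of `x₀`. An Urysohn function `f ∈ C₀(X)` with `f x₀ = 1`, `|f| ≤ 1` and support
in `U` gives `‖f • a‖ ≤ ε`, while the continuous map `v ↦ v - f • v` sends every generator
`g • b` to `(g - f g) • b` with `g - f g` vanishing at `x₀`; by nondegeneracy it therefore maps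
all of `A` into `C_{x₀}(X)A`, and `a - f • a` is an `ε`-approximation of `a` from there.

Conversely, the fibre norms of every element of `C_{x₀}(X)A` tend to `0` at `x₀`. If
`‖π x₀ a‖² < r < y²`, the functional calculus element `c = (|a⋆a| - r)⁺` lies in `ker π x₀`, and
`‖π x a‖² = ‖π x (a⋆a)‖ ≤ r + ‖π x c‖ < y²` for `x` near `x₀`.
-/

open scoped ZeroAtInfty
open Filter Topology

section ExcessOver

noncomputable def excessOver (r s : ℝ) : ℝ := max (|s| - r) 0

lemma continuous_excessOver (r : ℝ) : Continuous (excessOver r) := by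
  unfold excessOver; fun_prop

variable {B : Type*} [CStarAlgebra B]

lemma cfc_excessOver_eq_zero {b : B} {r : ℝ} (hbr : ‖b‖ ≤ r) :
    cfc (excessOver r) b = 0 := by
  nontriviality B
  rw [← cfc_const_zero ℝ b]
  refine cfc_congr fun s hs => max_eq_right ?_
  have := spectrum.norm_le_norm_of_mem hs
  rw [Real.norm_eq_abs] at this
  linarith

lemma norm_le_add_norm_cfc_excessOver {b : B} (hb : IsSelfAdjoint b) {r : ℝ} (hr : 0 ≤ r) :
    ‖b‖ ≤ r + ‖cfc (excessOver r) b‖ := by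
  conv_lhs => rw [← cfc_id ℝ b]
  refine norm_cfc_le (by positivity) fun s hs => ?_
  have h_spec := norm_apply_le_norm_cfc (excessOver r) b hs (continuous_excessOver r).continuousOn
  rw [id, Real.norm_eq_abs]
  calc |s| ≤ r + excessOver r s := by unfold excessOver; linarith [le_max_left (|s| - r) 0]
    _ ≤ r + ‖cfc (excessOver r) b‖ := by gcongr; exact (Real.le_norm_self _).trans h_spec

end ExcessOver

lemma norm_le_of_forall_norm_apply_le {ι A : Type*} {B : ι → Type*} [Norm A] [∀ i, Norm (B i)]
    {p : ∀ i, A → B i} (hnorm : ∀ a, ‖a‖ = ⨆ i, ‖p i a‖) {a : A} {C : ℝ} (hC : 0 ≤ C)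
    (h : ∀ i, ‖p i a‖ ≤ C) : ‖a‖ ≤ C :=
  hnorm a ▸ Real.iSup_le h hC

lemma exists_zeroAtInfty_eq_one_of_mem_nhds {X : Type*} [TopologicalSpace X]
    [LocallyCompactSpace X] [T2Space X] {x₀ : X} {U : Set X} (hU : U ∈ 𝓝 x₀) :
    ∃ f : C₀(X, ℂ), f x₀ = 1 ∧ (∀ x, ‖f x‖ ≤ 1) ∧ ∀ x ∉ U, f x = 0 := by
  obtain ⟨g, hg_one, hg_zero, hg_supp, hg_mem⟩ := exists_continuous_one_zero_of_isCompact
    isCompact_singleton isOpen_interior.isClosed_compl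
    (Set.disjoint_singleton_left.mpr fun h => h (mem_interior_iff_mem_nhds.mpr hU))
  refine ⟨⟨⟨fun x => (g x : ℂ), by fun_prop⟩,
    (hg_supp.comp_left Complex.ofReal_zero).is_zero_at_infty⟩, ?_, fun x => ?_, fun x hx => ?_⟩
  · simp [hg_one rfl]
  · simpa [abs_of_nonneg (hg_mem x).1] using (hg_mem x).2
  · simp [hg_zero fun h => hx (interior_subset h)]

section FieldOfCStarAlgebras

attribute [local instance] NonUnitalStarAlgHom.instContinuousLinearMapClassComplex

variable {X : Type*} [TopologicalSpace X] {A : Type*} [CStarAlgebra A]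
  {B : X → Type*} [∀ x, CStarAlgebra (B x)] (π : ∀ x, A →⋆ₐ[ℂ] B x) (m : C₀(X, ℂ) → A → A)

noncomputable def spanVanishingAt (x₀ : X) : Submodule ℂ A :=
  Submodule.span ℂ {y | ∃ (f : C₀(X, ℂ)) (a : A), f x₀ = 0 ∧ y = m f a}

noncomputable def tendstoZeroAt (x₀ : X) : Submodule ℂ A where
  carrier := {v | Tendsto (fun x => ‖π x v‖) (𝓝 x₀) (𝓝 0)}
  zero_mem' := by simp
  add_mem' {v w} hv hw := by
    refine squeeze_zero (fun _ => norm_nonneg _) (fun x => ?_) (by simpa using hv.add hw)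
    simpa only [map_add] using norm_add_le (π x v) (π x w)
  smul_mem' c v hv := by simpa [norm_smul] using hv.const_mul ‖c‖

lemma isClosed_tendstoZeroAt (x₀ : X) : IsClosed (tendstoZeroAt π x₀ : Set A) := by
  refine isClosed_of_closure_subset fun v hv => Metric.tendsto_nhds.mpr fun ε hε => ?_
  obtain ⟨w, hw, hvw⟩ := Metric.mem_closure_iff.mp hv (ε / 2) (half_pos hε)
  filter_upwards [Tendsto.eventually_lt_const (half_pos hε) hw] with x hx
  have h_fibre := NonUnitalStarAlgHom.norm_apply_le (π x) (v - w)
  have h_tri := norm_sub_norm_le (π x v) (π x w)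
  rw [map_sub] at h_fibre
  rw [dist_eq_norm] at hvw
  rw [dist_zero_right, norm_norm]
  linarith

lemma action_smul (hnorm : ∀ a : A, ‖a‖ = ⨆ x : X, ‖π x a‖)
    (hm_pi : ∀ (x : X) (f : C₀(X, ℂ)) (a : A), π x (m f a) = f x • π x a)
    (f : C₀(X, ℂ)) (c : ℂ) (v : A) : m f (c • v) = c • m f v := by
  rw [← sub_eq_zero, ← norm_le_zero_iff]
  refine norm_le_of_forall_norm_apply_le hnorm le_rfl fun x => ?_
  rw [map_sub, map_smul, hm_pi, hm_pi, map_smul, smul_comm, sub_self, norm_zero]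

lemma norm_action_le (hnorm : ∀ a : A, ‖a‖ = ⨆ x : X, ‖π x a‖)
    (hm_pi : ∀ (x : X) (f : C₀(X, ℂ)) (a : A), π x (m f a) = f x • π x a)
    (f : C₀(X, ℂ)) (v : A) : ‖m f v‖ ≤ ‖f‖ * ‖v‖ := by
  refine norm_le_of_forall_norm_apply_le hnorm (by positivity) fun x => ?_
  rw [hm_pi, norm_smul]
  exact mul_le_mul (f.toBCF.norm_coe_le_norm x) (NonUnitalStarAlgHom.norm_apply_le (π x) v)
    (norm_nonneg _) (norm_nonneg _)

noncomputable def actionCLM (hnorm : ∀ a : A, ‖a‖ = ⨆ x : X, ‖π x a‖)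
    (hm_pi : ∀ (x : X) (f : C₀(X, ℂ)) (a : A), π x (m f a) = f x • π x a)
    (hm_add_right : ∀ (f : C₀(X, ℂ)) (a b : A), m f (a + b) = m f a + m f b)
    (f : C₀(X, ℂ)) : A →L[ℂ] A :=
  LinearMap.mkContinuous
    { toFun := m f, map_add' := hm_add_right f, map_smul' := action_smul π m hnorm hm_pi f }
    ‖f‖ (norm_action_le π m hnorm hm_pi f)

lemma sub_action_mem_closure_spanVanishingAt (hnorm : ∀ a : A, ‖a‖ = ⨆ x : X, ‖π x a‖)
    (hm_pi : ∀ (x : X) (f : C₀(X, ℂ)) (a : A), π x (m f a) = f x • π x a)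
    (hm_add_left : ∀ (f g : C₀(X, ℂ)) (a : A), m (f + g) a = m f a + m g a)
    (hm_add_right : ∀ (f : C₀(X, ℂ)) (a b : A), m f (a + b) = m f a + m f b)
    (hm_comp : ∀ (f g : C₀(X, ℂ)) (a : A), m (f * g) a = m f (m g a))
    (hnondeg : closure (Submodule.span ℂ {y : A | ∃ (f : C₀(X, ℂ)) (a : A), y = m f a} : Set A)
      = Set.univ)
    {x₀ : X} {f : C₀(X, ℂ)} (hf : f x₀ = 1) (v : A) :
    v - m f v ∈ closure (spanVanishingAt m x₀ : Set A) := by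
  let T := ContinuousLinearMap.id ℂ A - actionCLM π m hnorm hm_pi hm_add_right f
  have hT : Submodule.span ℂ {y : A | ∃ (f : C₀(X, ℂ)) (a : A), y = m f a} ≤
      (spanVanishingAt m x₀).comap T.toLinearMap := by
    rw [Submodule.span_le]
    rintro _ ⟨g, a, rfl⟩
    refine Submodule.subset_span ⟨g - f * g, a, by simp [hf], ?_⟩
    change m g a - m f (m g a) = _
    rw [← hm_comp, sub_eq_iff_eq_add, ← hm_add_left, sub_add_cancel]
  exact map_mem_closure (f := T) T.continuous (hnondeg ▸ Set.mem_univ v) hT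

lemma mem_closure_spanVanishingAt_of_upperSemicontinuousAt [LocallyCompactSpace X] [T2Space X]
    (hnorm : ∀ a : A, ‖a‖ = ⨆ x : X, ‖π x a‖)
    (hm_pi : ∀ (x : X) (f : C₀(X, ℂ)) (a : A), π x (m f a) = f x • π x a)
    (hm_add_left : ∀ (f g : C₀(X, ℂ)) (a : A), m (f + g) a = m f a + m g a)
    (hm_add_right : ∀ (f : C₀(X, ℂ)) (a b : A), m f (a + b) = m f a + m f b)
    (hm_comp : ∀ (f g : C₀(X, ℂ)) (a : A), m (f * g) a = m f (m g a))
    (hnondeg : closure (Submodule.span ℂ {y : A | ∃ (f : C₀(X, ℂ)) (a : A), y = m f a} : Set A)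
      = Set.univ)
    {x₀ : X} {a : A} (ha : π x₀ a = 0) (hu : UpperSemicontinuousAt (fun x => ‖π x a‖) x₀) :
    a ∈ closure (spanVanishingAt m x₀ : Set A) := by
  rw [← closure_closure, Metric.mem_closure_iff]
  intro ε hε
  obtain ⟨f, hf_one, hf_le, hf_zero⟩ :=
    exists_zeroAtInfty_eq_one_of_mem_nhds (hu (ε / 2) (by simpa [ha] using half_pos hε))
  refine ⟨a - m f a, sub_action_mem_closure_spanVanishingAt π m hnorm hm_pi hm_add_left
    hm_add_right hm_comp hnondeg hf_one a, ?_⟩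
  have h_small : ‖m f a‖ ≤ ε / 2 := by
    refine norm_le_of_forall_norm_apply_le hnorm (by positivity) fun x => ?_
    rw [hm_pi, norm_smul]
    by_cases hx : ‖π x a‖ < ε / 2
    · nlinarith [hf_le x, norm_nonneg (f x), norm_nonneg (π x a)]
    · rw [hf_zero x hx, norm_zero, zero_mul]
      positivity
  rw [dist_self_sub_right]
  linarith

lemma closure_spanVanishingAt_subset_ker
    (hm_pi : ∀ (x : X) (f : C₀(X, ℂ)) (a : A), π x (m f a) = f x • π x a) (x₀ : X) :
    closure (spanVanishingAt m x₀ : Set A) ⊆ {a | π x₀ a = 0} := by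
  have h : spanVanishingAt m x₀ ≤ LinearMap.ker (π x₀).toAlgHom.toLinearMap := by
    refine Submodule.span_le.mpr ?_
    rintro _ ⟨f, a, hf, rfl⟩
    simp [hm_pi, hf]
  exact closure_minimal h (isClosed_eq (map_continuous (π x₀)) continuous_const)

lemma closure_spanVanishingAt_subset_tendstoZeroAt
    (hm_pi : ∀ (x : X) (f : C₀(X, ℂ)) (a : A), π x (m f a) = f x • π x a) (x₀ : X) :
    closure (spanVanishingAt m x₀ : Set A) ⊆ tendstoZeroAt π x₀ := by
  refine closure_minimal (Submodule.span_le.mpr ?_) (isClosed_tendstoZeroAt π x₀)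
  rintro _ ⟨f, a, hf, rfl⟩
  refine squeeze_zero (fun _ => norm_nonneg _) (fun x => ?_)
    (by simpa [hf] using (map_continuous f).norm.tendsto x₀ |>.mul_const ‖a‖)
  rw [hm_pi, norm_smul]
  exact mul_le_mul_of_nonneg_left (NonUnitalStarAlgHom.norm_apply_le (π x) a) (norm_nonneg _)

lemma upperSemicontinuousAt_norm_apply_of_ker_subset {x₀ : X}
    (hker : ∀ c, π x₀ c = 0 → c ∈ tendstoZeroAt π x₀) (a : A) :
    UpperSemicontinuousAt (fun x => ‖π x a‖) x₀ := by
  intro y (hy : ‖π x₀ a‖ < y)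
  have hy₀ : 0 < y := (norm_nonneg _).trans_lt hy
  obtain ⟨r, hr_gt, hr_lt⟩ :=
    exists_between (pow_lt_pow_left₀ hy (norm_nonneg _) two_ne_zero : ‖π x₀ a‖ ^ 2 < y ^ 2)
  have hb : IsSelfAdjoint (star a * a) := .star_mul_self a
  have hπ_cfc : ∀ x, π x (cfc (excessOver r) (star a * a)) =
      cfc (excessOver r) (π x (star a * a)) := fun x =>
    StarAlgHomClass.map_cfc (π x) _ _ (continuous_excessOver r).continuousOn
      (map_continuous _) hb (hb.map _)
  have hnorm_fibre : ∀ x, ‖π x (star a * a)‖ = ‖π x a‖ ^ 2 := fun x => by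
    rw [map_mul, map_star, CStarRing.norm_star_mul_self, sq]
  have hc : π x₀ (cfc (excessOver r) (star a * a)) = 0 := by
    rw [hπ_cfc]
    exact cfc_excessOver_eq_zero (hnorm_fibre x₀ ▸ hr_gt.le)
  filter_upwards [Tendsto.eventually_lt_const (sub_pos.mpr hr_lt) (hker _ hc)] with x hx
  have h_bound := norm_le_add_norm_cfc_excessOver (hb.map (π x)) ((sq_nonneg _).trans hr_gt.le)
  rw [← hπ_cfc, hnorm_fibre] at h_bound
  exact lt_of_pow_lt_pow_left₀ 2 hy₀.le (by linarith)

end FieldOfCStarAlgebras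

theorem usc_at_iff_ker_eq_general {X : Type*} [TopologicalSpace X] [LocallyCompactSpace X] [T2Space X]
    {A : Type*} [NormedRing A] [StarRing A] [CStarRing A] [NormedAlgebra ℂ A]
    [StarModule ℂ A] [CompleteSpace A]
    {B : X → Type*} [∀ x, NormedRing (B x)] [∀ x, StarRing (B x)] [∀ x, CStarRing (B x)]
    [∀ x, NormedAlgebra ℂ (B x)] [∀ x, StarModule ℂ (B x)] [∀ x, CompleteSpace (B x)]
    -- the fibre maps: surjective *-homomorphisms computing the norm of `A`
    (π : ∀ x : X, A →⋆ₐ[ℂ] B x)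
    (hnorm : ∀ a : A, ‖a‖ = ⨆ x : X, ‖π x a‖)
    -- the `C₀(X,ℂ)`-module structure `(f, a) ↦ m f a` on `A`
    (m : C₀(X, ℂ) → A → A)
    (hm_pi : ∀ (x : X) (f : C₀(X, ℂ)) (a : A), π x (m f a) = f x • π x a)
    (hm_add_left : ∀ (f g : C₀(X, ℂ)) (a : A), m (f + g) a = m f a + m g a)
    (hm_add_right : ∀ (f : C₀(X, ℂ)) (a b : A), m f (a + b) = m f a + m f b)
    (hm_comp : ∀ (f g : C₀(X, ℂ)) (a : A), m (f * g) a = m f (m g a))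
    -- nondegeneracy: the closed linear span of `{m f a}` is all of `A`
    (hnondeg : closure (Submodule.span ℂ {y : A | ∃ (f : C₀(X, ℂ)) (a : A), y = m f a} : Set A)
      = Set.univ)
    (x₀ : X) :
    (∀ a : A, UpperSemicontinuousAt (fun x : X => ‖π x a‖) x₀) ↔
      {a : A | π x₀ a = 0} =
        closure (Submodule.span ℂ
          {y : A | ∃ (f : C₀(X, ℂ)) (a : A), f x₀ = 0 ∧ y = m f a} : Set A) := by
  let _ : CStarAlgebra A := {}
  let _ : ∀ x, CStarAlgebra (B x) := fun _ => {}
  constructor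
  · intro husc
    refine subset_antisymm (fun a ha => ?_) (closure_spanVanishingAt_subset_ker π m hm_pi x₀)
    exact mem_closure_spanVanishingAt_of_upperSemicontinuousAt π m hnorm hm_pi hm_add_left
      hm_add_right hm_comp hnondeg ha (husc a)
  · intro hker
    exact upperSemicontinuousAt_norm_apply_of_ker_subset π fun c hc =>
      closure_spanVanishingAt_subset_tendstoZeroAt π m hm_pi x₀ (hker ▸ hc)

theorem usc_at_iff_ker_eq {X : Type*} [TopologicalSpace X] [LocallyCompactSpace X] [T2Space X]
    {A : Type*} [NormedRing A] [StarRing A] [CStarRing A] [NormedAlgebra ℂ A]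
    [StarModule ℂ A] [CompleteSpace A]
    {B : X → Type*} [∀ x, NormedRing (B x)] [∀ x, StarRing (B x)] [∀ x, CStarRing (B x)]
    [∀ x, NormedAlgebra ℂ (B x)] [∀ x, StarModule ℂ (B x)] [∀ x, CompleteSpace (B x)]
    -- the fibre maps: surjective *-homomorphisms computing the norm of `A`
    (π : ∀ x : X, A →⋆ₐ[ℂ] B x)
    (hsurj : ∀ x : X, Function.Surjective (π x))
    (hnorm : ∀ a : A, ‖a‖ = ⨆ x : X, ‖π x a‖)
    -- the `C₀(X,ℂ)`-module structure `(f, a) ↦ m f a` on `A`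
    (m : C₀(X, ℂ) → A → A)
    (hm_pi : ∀ (x : X) (f : C₀(X, ℂ)) (a : A), π x (m f a) = f x • π x a)
    (hm_add_left : ∀ (f g : C₀(X, ℂ)) (a : A), m (f + g) a = m f a + m g a)
    (hm_add_right : ∀ (f : C₀(X, ℂ)) (a b : A), m f (a + b) = m f a + m f b)
    (hm_mul_left : ∀ (f : C₀(X, ℂ)) (a b : A), m f (a * b) = (m f a) * b)
    (hm_mul_right : ∀ (f : C₀(X, ℂ)) (a b : A), m f (a * b) = a * (m f b))
    (hm_comp : ∀ (f g : C₀(X, ℂ)) (a : A), m (f * g) a = m f (m g a))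
    -- nondegeneracy: the closed linear span of `{m f a}` is all of `A`
    (hnondeg : closure (Submodule.span ℂ {y : A | ∃ (f : C₀(X, ℂ)) (a : A), y = m f a} : Set A)
      = Set.univ)
    (x₀ : X) :
    (∀ a : A, UpperSemicontinuousAt (fun x : X => ‖π x a‖) x₀) ↔
      {a : A | π x₀ a = 0} =
        closure (Submodule.span ℂ
          {y : A | ∃ (f : C₀(X, ℂ)) (a : A), f x₀ = 0 ∧ y = m f a} : Set A) :=
  usc_at_iff_ker_eq_general π hnorm m hm_pi hm_add_left hm_add_right hm_comp hnondeg x₀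
end

section
/- Let X be a locally compact Hausdorff space and let (A, {π_x : A → A_x}_{x∈X}, X) be a field of C*-algebras over X: A and each A_x are C*-algebras, each π_x is a surjective *-homomorphism, ‖a‖ = sup_{x∈X} ‖π_x(a)‖ for every a ∈ A, and A carries a C₀(X,ℂ)-module structure (f,a) ↦ f·a satisfying π_x(f·a) = f(x)·π_x(a) for all x ∈ X. Let F ⊆ X be a closed subset and let a ∈ A be such that the function x ↦ ‖π_x(a)‖ is continuous and vanishes at infinity on X, and π_x(a) = 0 for every x ∈ F. Then a belongs to the closed linear span in A of {f·b : f ∈ C₀(X,ℂ), f ≡ 0 on F, b ∈ A}. -/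
open scoped ZeroAtInfty

lemma psi_facts {ε t : ℝ} (hε : 0 < ε) (ht : 0 ≤ t) :
    0 ≤ max 0 (t - ε) / max t ε ∧ max 0 (t - ε) / max t ε ≤ 1 ∧
      (1 - max 0 (t - ε) / max t ε) * t ≤ ε := by
  have hden : 0 < max t ε := lt_max_of_lt_right hε
  rcases le_or_gt t ε with h | h
  · have h1 : max 0 (t - ε) = 0 := max_eq_left (by linarith)
    refine ⟨by positivity, ?_, ?_⟩ <;> rw [h1] <;> simp <;> linarith
  · have h1 : max 0 (t - ε) = t - ε := max_eq_right (by linarith)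
    have h2 : max t ε = t := max_eq_left (le_of_lt h)
    have htpos : 0 < t := lt_trans hε h
    refine ⟨by positivity, ?_, ?_⟩
    · rw [h1, h2]; rw [div_le_one htpos]; linarith
    · rw [h1, h2]; field_simp; linarith

theorem mem_closed_span_of_vanishing_on_closed {X : Type*}
    [TopologicalSpace X] [LocallyCompactSpace X] [T2Space X]
    {A : Type*} [NormedRing A] [StarRing A] [CStarRing A] [NormedAlgebra ℂ A]
    [StarModule ℂ A] [CompleteSpace A]
    {B : X → Type*} [∀ x, NormedRing (B x)] [∀ x, StarRing (B x)] [∀ x, CStarRing (B x)]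
    [∀ x, NormedAlgebra ℂ (B x)] [∀ x, StarModule ℂ (B x)] [∀ x, CompleteSpace (B x)]
    -- the fibre maps: surjective *-homomorphisms computing the norm of `A`
    (π : ∀ x : X, A →⋆ₐ[ℂ] B x)
    (hsurj : ∀ x : X, Function.Surjective (π x))
    (hnorm : ∀ a : A, ‖a‖ = ⨆ x : X, ‖π x a‖)
    -- the `C₀(X,ℂ)`-module structure `(f, a) ↦ m f a` on `A`, compatible with the `π x`
    (m : C₀(X, ℂ) → A → A)
    (hm_pi : ∀ (x : X) (f : C₀(X, ℂ)) (a : A), π x (m f a) = f x • π x a)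
    (F : Set X) (hF : IsClosed F) (a : A)
    (hcont : Continuous fun x : X => ‖π x a‖)
    (hvanish : Filter.Tendsto (fun x : X => ‖π x a‖) (Filter.cocompact X) (nhds 0))
    (hzero : ∀ x ∈ F, π x a = 0) :
    a ∈ closure (Submodule.span ℂ
      {y : A | ∃ (f : C₀(X, ℂ)) (b : A), (∀ x ∈ F, f x = 0) ∧ y = m f b} : Set A) := by
  rw [Metric.mem_closure_iff]
  intro ε hε
  set δ := ε / 2 with hδdef
  have hδ : 0 < δ := by positivity
  set ψ : ℝ → ℝ := fun t => max 0 (t - δ) / max t δ with hψ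
  have hψcont : Continuous ψ := by
    apply Continuous.div (continuous_const.max (continuous_id.sub continuous_const))
      (continuous_id.max continuous_const)
    intro t
    exact ne_of_gt (lt_max_of_lt_right hδ)
  have hψ0 : ψ 0 = 0 := by
    simp [hψ, max_eq_left (by linarith : (0:ℝ) - δ ≤ 0)]; left; linarith
  -- the C₀ function
  set g : X → ℝ := fun x => ‖π x a‖ with hg
  have hfc : Continuous fun x : X => ((ψ (g x) : ℝ) : ℂ) :=
    Complex.continuous_ofReal.comp (hψcont.comp hcont)
  have hfz : Filter.Tendsto (fun x : X => ((ψ (g x) : ℝ) : ℂ))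
      (Filter.cocompact X) (nhds 0) := by
    have h1 : Filter.Tendsto (fun x : X => ψ (g x)) (Filter.cocompact X) (nhds 0) := by
      have := (hψcont.tendsto 0).comp hvanish
      rwa [hψ0] at this
    have := (Complex.continuous_ofReal.tendsto 0).comp h1
    simpa [Function.comp_def] using this
  set f : C₀(X, ℂ) := ⟨⟨fun x => ((ψ (g x) : ℝ) : ℂ), hfc⟩, hfz⟩ with hf
  have hfF : ∀ x ∈ F, f x = 0 := by
    intro x hx
    have : g x = 0 := by simp [hg, hzero x hx]
    simp [hf, this, hψ0]
  refine ⟨m f a, Submodule.subset_span ⟨f, a, hfF, rfl⟩, ?_⟩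
  have key : ∀ x : X, ‖π x (a - m f a)‖ ≤ δ := by
    intro x
    have hgx : 0 ≤ g x := norm_nonneg _
    obtain ⟨h1, h2, h3⟩ := psi_facts hδ hgx
    have : π x (a - m f a) = ((1 : ℂ) - (ψ (g x) : ℂ)) • π x a := by
      rw [map_sub, hm_pi, sub_smul, one_smul]
      rfl
    rw [this, norm_smul]
    have : ‖(1 : ℂ) - (ψ (g x) : ℂ)‖ = 1 - ψ (g x) := by
      rw [show (1 : ℂ) - (ψ (g x) : ℂ) = ((1 - ψ (g x) : ℝ) : ℂ) by push_cast; ring,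
        Complex.norm_real, Real.norm_eq_abs, abs_of_nonneg (by linarith)]
    rw [this]
    exact h3
  have hle : dist a (m f a) ≤ δ := by
    rw [dist_eq_norm, hnorm]
    exact Real.iSup_le key (le_of_lt hδ)
  calc dist a (m f a) ≤ δ := hle
    _ < ε := by rw [hδdef]; linarith
end

section
/- Let 𝒢 be a groupoid with unit space X; for x ∈ X let 𝒢^x denote the set of arrows of 𝒢 with range x. Let ξ be a complex-valued function on the arrows of 𝒢 such that for every x ∈ X the family (|ξ(γ₁)|²)_{γ₁∈𝒢^x} is summable. Then: (a) for every arrow γ the family (conj(ξ(γ₁)) · ξ(γ⁻¹γ₁))_{γ₁∈𝒢^{r(γ)}} is summable, so that h(γ) = Σ_{γ₁∈𝒢^{r(γ)}} conj(ξ(γ₁)) ξ(γ⁻¹γ₁) is well defined; and (b) the function h is positive definite: for every x ∈ X, every n ∈ ℕ and all arrows γ₁, …, γₙ ∈ 𝒢^x, the n × n complex matrix [h(γᵢ⁻¹γⱼ)]_{i,j} is positive semidefinite. -/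
set_option maxHeartbeats 1000000

open CategoryTheory
open scoped ComplexOrder

def fibShiftEquiv {G : Type*} [Groupoid G] {c d : G} (γ : c ⟶ d) :
    (Σ e : G, e ⟶ d) ≃ (Σ e : G, e ⟶ c) where
  toFun p := ⟨p.1, p.2 ≫ Groupoid.inv γ⟩
  invFun p := ⟨p.1, p.2 ≫ γ⟩
  left_inv p := by cases p; simp [Groupoid.inv_eq_inv]
  right_inv p := by cases p; simp [Groupoid.inv_eq_inv]

lemma godement_summable_aux {G : Type*} [Groupoid G]
    (ξ : ∀ ⦃a b : G⦄, (a ⟶ b) → ℂ)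
    (hξ : ∀ x : G, Summable fun γ₁ : Σ a : G, a ⟶ x => ‖ξ γ₁.2‖ ^ 2)
    {c d : G} (γ : c ⟶ d) :
    Summable fun γ₁ : Σ e : G, e ⟶ d =>
      (starRingEnd ℂ) (ξ γ₁.2) * ξ (γ₁.2 ≫ Groupoid.inv γ) := by
  have h2 : Summable fun γ₁ : Σ e : G, e ⟶ d => ‖ξ (γ₁.2 ≫ Groupoid.inv γ)‖ ^ 2 :=
    ((fibShiftEquiv γ).summable_iff
      (f := fun p : Σ e : G, e ⟶ c => ‖ξ p.2‖ ^ 2)).mpr (hξ c)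
  apply Summable.of_norm
  refine Summable.of_nonneg_of_le (fun _ => norm_nonneg _) (fun γ₁ => ?_)
    (((hξ d).add h2).mul_left (1/2))
  rw [norm_mul, RCLike.norm_conj]
  nlinarith [sq_nonneg (‖ξ γ₁.2‖ - ‖ξ (γ₁.2 ≫ Groupoid.inv γ)‖), norm_nonneg (ξ γ₁.2),
    norm_nonneg (ξ (γ₁.2 ≫ Groupoid.inv γ))]

/-- The Godement-type function `h(δ) = Σ_{γ₁ ∈ 𝒢^{r(δ)}} conj(ξ(γ₁)) ξ(δ⁻¹γ₁)` associated with
a square-summable-on-fibres function `ξ` on the arrows of a groupoid.  Here an arrow with range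
`d` is an element of `Σ e, e ⟶ d`, and `δ⁻¹γ₁` is `γ₁ ≫ Groupoid.inv δ`. -/
noncomputable def godementFun {G : Type*} [Groupoid G]
    (ξ : ∀ ⦃a b : G⦄, (a ⟶ b) → ℂ) {c d : G} (δ : c ⟶ d) : ℂ :=
  ∑' γ₁ : Σ e : G, e ⟶ d, (starRingEnd ℂ) (ξ γ₁.2) * ξ (γ₁.2 ≫ Groupoid.inv δ)

lemma godement_eq_aux {G : Type*} [Groupoid G]
    (ξ : ∀ ⦃a b : G⦄, (a ⟶ b) → ℂ) {a b x : G} (α : a ⟶ x) (β : b ⟶ x) :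
    godementFun ξ (β ≫ Groupoid.inv α) =
      ∑' η : Σ e : G, e ⟶ x,
        (starRingEnd ℂ) (ξ (η.2 ≫ Groupoid.inv α)) * ξ (η.2 ≫ Groupoid.inv β) := by
  rw [godementFun, ← Equiv.tsum_eq (fibShiftEquiv α)]
  refine tsum_congr fun η => ?_
  cases η
  simp [fibShiftEquiv, Groupoid.inv_eq_inv]

lemma godement_inner_summable {G : Type*} [Groupoid G]
    (ξ : ∀ ⦃a b : G⦄, (a ⟶ b) → ℂ)
    (hξ : ∀ x : G, Summable fun γ₁ : Σ a : G, a ⟶ x => ‖ξ γ₁.2‖ ^ 2)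
    {a b x : G} (α : a ⟶ x) (β : b ⟶ x) :
    Summable fun η : Σ e : G, e ⟶ x =>
      (starRingEnd ℂ) (ξ (η.2 ≫ Groupoid.inv α)) * ξ (η.2 ≫ Groupoid.inv β) := by
  have h := godement_summable_aux ξ hξ (β ≫ Groupoid.inv α)
  have h2 := ((fibShiftEquiv α).summable_iff
    (f := fun γ₁ : Σ e : G, e ⟶ a =>
      (starRingEnd ℂ) (ξ γ₁.2) * ξ (γ₁.2 ≫ Groupoid.inv (β ≫ Groupoid.inv α)))).mpr h
  refine h2.congr fun η => ?_
  cases η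
  simp [fibShiftEquiv, Groupoid.inv_eq_inv]

theorem godement_summable_and_posdef {G : Type*} [Groupoid G]
    (ξ : ∀ ⦃a b : G⦄, (a ⟶ b) → ℂ)
    (hξ : ∀ x : G, Summable fun γ₁ : Σ a : G, a ⟶ x => ‖ξ γ₁.2‖ ^ 2) :
    (∀ {c d : G} (γ : c ⟶ d),
        Summable fun γ₁ : Σ e : G, e ⟶ d =>
          (starRingEnd ℂ) (ξ γ₁.2) * ξ (γ₁.2 ≫ Groupoid.inv γ)) ∧
      ∀ (x : G) (n : ℕ) (γ : Fin n → Σ a : G, a ⟶ x),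
        (Matrix.of fun i j : Fin n =>
          godementFun ξ ((γ j).2 ≫ Groupoid.inv (γ i).2)).PosSemidef := by
  refine ⟨fun {c d} γ => godement_summable_aux ξ hξ γ, fun x n γ => ?_⟩
  rw [Matrix.posSemidef_iff_dotProduct_mulVec]
  constructor
  · ext i j
    rw [Matrix.conjTranspose_apply, Matrix.of_apply, Matrix.of_apply,
      godement_eq_aux, godement_eq_aux, tsum_star]
    refine tsum_congr fun η => ?_
    simp only [star_mul', RCLike.star_def, Complex.conj_conj]
    ring
  · intro v
    set f : Fin n → (Σ e : G, e ⟶ x) → ℂ :=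
      fun i η => v i * ξ (η.2 ≫ Groupoid.inv (γ i).2) with hf
    have hsum : ∀ i j : Fin n, Summable fun η => star (f i η) * f j η := by
      intro i j
      refine ((godement_inner_summable ξ hξ (γ i).2 (γ j).2).mul_left
        (star (v i) * v j)).congr fun η => ?_
      simp only [hf, star_mul', RCLike.star_def]
      ring
    have key : dotProduct (star v) ((Matrix.of fun i j : Fin n =>
        godementFun ξ ((γ j).2 ≫ Groupoid.inv (γ i).2)).mulVec v) =
        ∑' η : Σ e : G, e ⟶ x,
          star (∑ i : Fin n, f i η) * (∑ j : Fin n, f j η) := by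
      calc dotProduct (star v) ((Matrix.of fun i j : Fin n =>
              godementFun ξ ((γ j).2 ≫ Groupoid.inv (γ i).2)).mulVec v)
          = ∑ i : Fin n, ∑ j : Fin n, star (v i) *
              (godementFun ξ ((γ j).2 ≫ Groupoid.inv (γ i).2) * v j) := by
            simp [dotProduct, Matrix.mulVec, Finset.mul_sum]
        _ = ∑ i : Fin n, ∑ j : Fin n, ∑' η : Σ e : G, e ⟶ x,
              star (f i η) * f j η := by
            refine Finset.sum_congr rfl fun i _ => Finset.sum_congr rfl fun j _ => ?_
            rw [godement_eq_aux, ← tsum_mul_right, ← tsum_mul_left]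
            refine tsum_congr fun η => ?_
            simp only [hf, star_mul', RCLike.star_def]
            ring
        _ = ∑ i : Fin n, ∑' η : Σ e : G, e ⟶ x, ∑ j : Fin n,
              star (f i η) * f j η :=
            Finset.sum_congr rfl fun i _ => (Summable.tsum_finsetSum fun j _ => hsum i j).symm
        _ = ∑' η : Σ e : G, e ⟶ x, ∑ i : Fin n, ∑ j : Fin n,
              star (f i η) * f j η :=
            (Summable.tsum_finsetSum fun i _ => summable_sum fun j _ => hsum i j).symm
        _ = ∑' η : Σ e : G, e ⟶ x,
              star (∑ i : Fin n, f i η) * (∑ j : Fin n, f j η) := by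
            refine tsum_congr fun η => ?_
            rw [star_sum, Finset.sum_mul_sum]
    rw [key]
    exact tsum_nonneg fun η => star_mul_self_nonneg _
end
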